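/- For the regular 24-cell inscribed in a unit 4-sphere, the product of the squared lengths of all its chords equals 6^96. -/

import Mathlib

/-!
Scaling by `√2`, the vertices become the 24 integer vectors `c` with two entries `±1` and two
entries `0`, all of norm `‖c‖² = 2`. For two vertices `a, b` the squared chord is therefore
`‖a - b‖² = ‖c_a - c_b‖² / 2 = 2 - ⟪c_a, c_b⟫`, an integer. Since `⟪c_a, c_b⟫ ∈ {1, 0, -1, -2}`
for `a ≠ b`, the product over the 276 pairs is `1^96 · 2^72 · 3^96 · 4^12 = 6^96`, which is checked
by evaluating it.
-/

open Finset

abbrev Vertex24 := {p : Fin 4 × Fin 4 // p.1 < p.2} × (Bool × Bool)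

namespace Vertex24

def coord (q : Vertex24) (m : Fin 4) : ℤ :=
  if m = q.1.1.1 then (if q.2.1 then 1 else -1)
  else if m = q.1.1.2 then (if q.2.2 then 1 else -1) else 0

def gram (a b : Vertex24) : ℤ := ∑ m, coord a m * coord b m

theorem gram_comm (a b : Vertex24) : gram a b = gram b a := by
  simp only [gram, mul_comm]

theorem sum_coord_sq (q : Vertex24) : ∑ m, coord q m ^ 2 = 2 := by
  revert q; decide

theorem sum_coord_sub_sq (a b : Vertex24) :
    ∑ m, (coord a m - coord b m) ^ 2 = 2 * (2 - gram a b) := by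
  have h := congrArg₂ (· + ·) (sum_coord_sq a) (sum_coord_sq b)
  simp only [sub_sq, sum_add_distrib, sum_sub_distrib, gram, mul_assoc, ← mul_sum] at h ⊢
  linarith

def chordSq : Sym2 Vertex24 → ℤ := Sym2.lift ⟨fun a b => 2 - gram a b, by simp [gram_comm]⟩

theorem chordSq_mk (a b : Vertex24) : chordSq s(a, b) = 2 - gram a b := rfl

theorem prod_chordSq :
    ∏ z ∈ univ.filter (fun z : Sym2 Vertex24 => ¬z.IsDiag), chordSq z = 6 ^ 96 := by
  set_option maxRecDepth 10000 in decide

end Vertex24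

theorem EuclideanSpace.norm_sub_sq_of_eq_intCast_div_sqrt_two {ι : Type*} [Fintype ι]
    {u w : EuclideanSpace ℝ ι} {x y : ι → ℤ} (hu : ∀ i, u i = x i / √2)
    (hw : ∀ i, w i = y i / √2) :
    ‖u - w‖ ^ 2 = ((∑ i, (x i - y i) ^ 2 : ℤ) : ℝ) / 2 := by
  rw [EuclideanSpace.norm_sq_eq, Int.cast_sum, sum_div]
  refine sum_congr rfl fun i _ => ?_
  rw [PiLp.sub_apply, hu, hw, Real.norm_eq_abs, sq_abs, ← sub_div, div_pow,
    Real.sq_sqrt zero_le_two]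
  push_cast
  rfl

open scoped Classical in
theorem cell24_prod_squared_chords
    (v : ({p : Fin 4 × Fin 4 // p.1 < p.2} × (Bool × Bool)) → EuclideanSpace ℝ (Fin 4))
    (hv : ∀ q, v q = fun m =>
      (if m = q.1.1.1 then (if q.2.1 then 1 else -1)
       else if m = q.1.1.2 then (if q.2.2 then 1 else -1) else 0) / Real.sqrt 2)
    (f : Sym2 ({p : Fin 4 × Fin 4 // p.1 < p.2} × (Bool × Bool)) → ℝ)
    (hf : ∀ a b, f s(a, b) = ‖v a - v b‖) :
    ∏ z ∈ Finset.univ.filter (fun z => ¬z.IsDiag), f z ^ 2 = (6 : ℝ) ^ 96 := by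
  have hv_coord (q : Vertex24) (m : Fin 4) : v q m = (Vertex24.coord q m : ℝ) / √2 := by
    simp only [hv, Vertex24.coord]
    split_ifs <;> norm_num
  have hf_chord (z : Sym2 Vertex24) : f z ^ 2 = Vertex24.chordSq z := by
    induction z using Sym2.ind with
    | _ a b =>
      rw [hf, EuclideanSpace.norm_sub_sq_of_eq_intCast_div_sqrt_two (hv_coord a) (hv_coord b),
        Vertex24.sum_coord_sub_sq, Vertex24.chordSq_mk]
      push_cast
      ring
  rw [prod_congr rfl fun z _ => hf_chord z, ← Int.cast_prod, Vertex24.prod_chordSq]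
  norm_num
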